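/- arXiv:1401.0808 — 2 statements merged into one kernel-verified Lean document; each statement's English description precedes it below -/
import Mathlib

section
/- Let X ⊆ ℝᵈ be compact with C¹ boundary, x ∈ ∂X with outward unit normal n(x), and H_x = x + H_{n(x)} the supporting halfspace at x. Let ρ be a C¹ radial probability density with compact support and f : [0,1] → ℝ be C¹ on an interval [β,ω] ⊆ (0,1) containing the relevant values. Then there exists M > 0 such that for all y in the tubular neighborhood with both θ_a^X(y) ∈ [β,ω] and θ_a^{H_{ξ(y)}}(y) ∈ [β,ω], |f(θ_a^X(y)) − f(θ_a^{H_{ξ(y)}}(y))| ≤ M a, where ξ(y) is the nearest-point projection of y onto ∂X and θ_a^Y = 𝟙_Y ⋆ ρ_a. -/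
open MeasureTheory

noncomputable def intensity {d : ℕ} (X : Set (EuclideanSpace ℝ (Fin d)))
    (ρ : EuclideanSpace ℝ (Fin d) → ℝ) (z : EuclideanSpace ℝ (Fin d)) : ℝ :=
  ∫ y : EuclideanSpace ℝ (Fin d), X.indicator (fun _ => (1 : ℝ)) y * ρ (z - y)

noncomputable def scaleKernel {d : ℕ} (a : ℝ) (ρ : EuclideanSpace ℝ (Fin d) → ℝ) :
    EuclideanSpace ℝ (Fin d) → ℝ :=
  fun x => (a ^ d)⁻¹ * ρ (a⁻¹ • x)

/-- The supporting halfspace `H_p = p + H_{n(p)}` at a boundary point `p` with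
outward unit normal `n p`. -/
def suppHalfspace {d : ℕ} (n : EuclideanSpace ℝ (Fin d) → EuclideanSpace ℝ (Fin d))
    (p : EuclideanSpace ℝ (Fin d)) : Set (EuclideanSpace ℝ (Fin d)) :=
  {y | inner ℝ (y - p) (n p) ≤ (0 : ℝ)}

open Metric Set
open scoped symmDiff

/-!
With `supp ρ ⊆ B(0, D)`, both intensities average the same kernel `z ↦ ρ_a(y - z)`, which is
bounded by `a⁻ᵈ sup ρ` and supported in `B(y, aD)`, so they differ by at most
`a⁻ᵈ sup ρ · λ((X ∆ H) ∩ B(y, aD))`. Since `θ_a^X(y) ∈ (0, 1)`, that ball meets both `X` and its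
complement, hence (being connected) `∂X`; so `B(y, aD) ⊆ B(ξ(y), 2aD)`, where the quadratic
approximation of the boundary bounds the volume by `C (2aD)^{d+1}`. The intensities therefore
differ by `O(a)`, and `f` is Lipschitz on `[β, ω]`.
-/

theorem IsPreconnected.inter_frontier_nonempty {α : Type*} [TopologicalSpace α] {C X : Set α}
    (hC : IsPreconnected C) (hCX : (C ∩ X).Nonempty) (hCX' : (C \ X).Nonempty) :
    (C ∩ frontier X).Nonempty := by
  by_contra h
  have hcover : C ⊆ interior X ∪ (closure X)ᶜ := fun z hz => by
    by_contra hz'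
    simp only [mem_union, mem_compl_iff, not_or, not_not] at hz'
    exact h ⟨z, hz, hz'.2, hz'.1⟩
  rcases hC.subset_or_subset isOpen_interior isClosed_closure.isOpen_compl
      (disjoint_compl_right.mono_left interior_subset_closure) hcover with hin | hout
  · obtain ⟨z, hzC, hzX⟩ := hCX'
    exact hzX (interior_subset (hin hzC))
  · obtain ⟨z, hzC, hzX⟩ := hCX
    exact hout hzC (subset_closure hzX)

theorem IsPreconnected.inter_frontier_nonempty_of_setIntegral {α E : Type*} [TopologicalSpace α]
    [MeasurableSpace α] [NormedAddCommGroup E] [NormedSpace ℝ E] {μ : Measure α} {g : α → E}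
    {C X : Set α} (hC : IsPreconnected C) (hg : Function.support g ⊆ C)
    (h₀ : ∫ x in X, g x ∂μ ≠ 0) (h₁ : ∫ x in X, g x ∂μ ≠ ∫ x, g x ∂μ) :
    (C ∩ frontier X).Nonempty := by
  refine hC.inter_frontier_nonempty ?_ ?_ <;> by_contra h
  · exact h₀ (setIntegral_eq_zero_of_forall_eq_zero fun x hx =>
      Function.notMem_support.1 fun hs => h ⟨x, hg hs, hx⟩)
  · exact h₁ (setIntegral_eq_integral_of_forall_compl_eq_zero fun x hx =>
      Function.notMem_support.1 fun hs => h ⟨x, hg hs, hx⟩)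

theorem abs_setIntegral_sub_setIntegral_le {α : Type*} [MeasurableSpace α] {μ : Measure α}
    {g : α → ℝ} {s t K : Set α} {B : ℝ} (hs : MeasurableSet s) (ht : MeasurableSet t)
    (hK : MeasurableSet K) (hg : Integrable g μ) (hgK : Function.support g ⊆ K)
    (hgB : ∀ x, ‖g x‖ ≤ B) (hfin : μ (s ∆ t ∩ K) < ⊤) :
    |∫ x in s, g x ∂μ - ∫ x in t, g x ∂μ| ≤ B * μ.real (s ∆ t ∩ K) := by
  have hsupp : (s ∆ t).indicator g = (s ∆ t ∩ K).indicator g := by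
    rw [← indicator_indicator, indicator_eq_self.2 hgK]
  calc |∫ x in s, g x ∂μ - ∫ x in t, g x ∂μ|
      = |∫ x, (s.indicator g x - t.indicator g x) ∂μ| := by
        rw [integral_sub (hg.indicator hs) (hg.indicator ht), integral_indicator hs,
          integral_indicator ht]
    _ ≤ ∫ x, |s.indicator g x - t.indicator g x| ∂μ := abs_integral_le_integral_abs
    _ = ∫ x in s ∆ t ∩ K, |g x| ∂μ := by
        simp_rw [← abs_indicator_symmDiff, hsupp,
          ← integral_indicator ((hs.symmDiff ht).inter hK)]
        congr 1 with x
        by_cases hx : x ∈ s ∆ t ∩ K <;> simp [hx]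
    _ ≤ B * μ.real (s ∆ t ∩ K) :=
        (le_abs_self _).trans (by
          simpa using norm_setIntegral_le_of_norm_le_const (f := fun x => |g x|) hfin
            fun x _ => by simpa using hgB x)

theorem support_comp_sub_left_subset {E : Type*} [SeminormedAddCommGroup E] {k : E → ℝ} {ε : ℝ}
    (hk : Function.support k ⊆ closedBall 0 ε) (z : E) :
    Function.support (fun y => k (z - y)) ⊆ closedBall z ε := fun y hy => by
  simpa [dist_eq_norm, norm_sub_rev] using hk hy

section ScaleKernel

variable {d : ℕ} {a : ℝ} {ρ : EuclideanSpace ℝ (Fin d) → ℝ}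

theorem continuous_scaleKernel (hρ : Continuous ρ) : Continuous (scaleKernel a ρ) := by
  unfold scaleKernel
  fun_prop

theorem support_scaleKernel_subset {D : ℝ} (ha : 0 < a)
    (hρ : Function.support ρ ⊆ closedBall 0 D) :
    Function.support (scaleKernel a ρ) ⊆ closedBall 0 (a * D) := fun x hx => by
  have hx' : ‖a⁻¹ • x‖ ≤ D := by
    simpa using hρ (right_ne_zero_of_mul hx)
  rw [norm_smul, norm_inv, Real.norm_of_nonneg ha.le, inv_mul_le_iff₀ ha] at hx'
  simpa using hx'

theorem norm_scaleKernel_le {S : ℝ} (ha : 0 ≤ a) (hρ : ∀ x, ‖ρ x‖ ≤ S)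
    (x : EuclideanSpace ℝ (Fin d)) : ‖scaleKernel a ρ x‖ ≤ (a ^ d)⁻¹ * S := by
  rw [scaleKernel, norm_mul, Real.norm_of_nonneg (by positivity)]
  gcongr
  exact hρ _

theorem integral_scaleKernel (ha : 0 < a) : ∫ x, scaleKernel a ρ x = ∫ x, ρ x := by
  unfold scaleKernel
  rw [integral_const_mul, Measure.integral_comp_inv_smul_of_nonneg _ _ ha.le,
    finrank_euclideanSpace_fin, smul_eq_mul, inv_mul_cancel_left₀ (pow_ne_zero _ ha.ne')]

end ScaleKernel

theorem isClosed_suppHalfspace {d : ℕ} (n : EuclideanSpace ℝ (Fin d) → EuclideanSpace ℝ (Fin d))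
    (p : EuclideanSpace ℝ (Fin d)) : IsClosed (suppHalfspace n p) :=
  isClosed_le (by fun_prop) continuous_const

section Intensity

variable {d : ℕ} {X H : Set (EuclideanSpace ℝ (Fin d))} {k : EuclideanSpace ℝ (Fin d) → ℝ}
  {z : EuclideanSpace ℝ (Fin d)} {ε : ℝ}

theorem intensity_eq_setIntegral (hX : MeasurableSet X) :
    intensity X k z = ∫ y in X, k (z - y) := by
  rw [intensity, ← integral_indicator hX]
  congr 1 with y
  by_cases hy : y ∈ X <;> simp [hy]

theorem infDist_frontier_le_of_intensity_mem_Ioo (hX : MeasurableSet X)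
    (hk : Function.support k ⊆ closedBall 0 ε) (hk₁ : ∫ x, k x = 1)
    (hz : intensity X k z ∈ Ioo 0 1) : infDist z (frontier X) ≤ ε := by
  rw [intensity_eq_setIntegral hX] at hz
  obtain ⟨p, hpz, hpX⟩ :=
    (convex_closedBall z ε).isPreconnected.inter_frontier_nonempty_of_setIntegral
      (support_comp_sub_left_subset hk z) hz.1.ne'
      (by rw [integral_sub_left_eq_self k volume z, hk₁]; exact hz.2.ne)
  exact (infDist_le_dist_of_mem hpX).trans (by rwa [dist_comm, ← mem_closedBall])

theorem abs_intensity_sub_intensity_le {B V : ℝ} {p : EuclideanSpace ℝ (Fin d)}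
    (hX : MeasurableSet X) (hH : MeasurableSet H) (hkc : Continuous k)
    (hk : Function.support k ⊆ closedBall 0 ε) (hkB : ∀ x, ‖k x‖ ≤ B) (hzp : dist z p ≤ ε)
    (hvol : volume (X ∆ H ∩ closedBall p (2 * ε)) ≤ ENNReal.ofReal V) (hV : 0 ≤ V) :
    |intensity X k z - intensity H k z| ≤ B * V := by
  have hsupp := support_comp_sub_left_subset hk z
  have hint : Integrable (fun y => k (z - y)) :=
    (hkc.comp (continuous_const.sub continuous_id)).integrable_of_hasCompactSupport
      (HasCompactSupport.intro (isCompact_closedBall z ε) fun y hy => Function.notMem_support.1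
        fun h => hy (hsupp h))
  have hball : closedBall z ε ⊆ closedBall p (2 * ε) :=
    closedBall_subset_closedBall' (by linarith)
  rw [intensity_eq_setIntegral hX, intensity_eq_setIntegral hH]
  calc _ ≤ B * volume.real (X ∆ H ∩ closedBall p (2 * ε)) :=
        abs_setIntegral_sub_setIntegral_le hX hH measurableSet_closedBall hint
          (hsupp.trans hball) (fun _ => hkB _) (hvol.trans_lt ENNReal.ofReal_lt_top)
    _ ≤ B * V := by
        have hB : 0 ≤ B := (norm_nonneg _).trans (hkB 0)
        gcongr
        exact ENNReal.toReal_le_of_le_ofReal hV hvol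

end Intensity

theorem stmt5_general (d : ℕ) (X : Set (EuclideanSpace ℝ (Fin d))) (hX : IsCompact X)
    -- outward unit normal field on the C¹ boundary
    (n : EuclideanSpace ℝ (Fin d) → EuclideanSpace ℝ (Fin d))
    -- quadratic approximation property of the C¹ boundary by supporting halfspaces
    (r Cgeom : ℝ) (hr : 0 < r) (hC : 0 < Cgeom)
    (hgeom : ∀ p ∈ frontier X, ∀ R ∈ Set.Ioo (0 : ℝ) r,
      volume ((symmDiff X (suppHalfspace n p)) ∩ Metric.closedBall p R)
        ≤ ENNReal.ofReal (Cgeom * R ^ (d + 1)))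
    -- nearest-point projection onto the boundary, defined on the tubular neighborhood
    (ξ : EuclideanSpace ℝ (Fin d) → EuclideanSpace ℝ (Fin d))
    (hξ : ∀ y ∈ Metric.thickening r (frontier X),
      ξ y ∈ frontier X ∧ dist y (ξ y) = Metric.infDist y (frontier X))
    -- the kernel: a C¹ radial compactly supported probability density
    (ρ : EuclideanSpace ℝ (Fin d) → ℝ) (hρC1 : ContDiff ℝ 1 ρ)
    (hρsupp : HasCompactSupport ρ)
    (hρ1 : ∫ x, ρ x = 1)
    -- the weight function, C¹ on [β,ω] ⊆ (0,1)
    (β ω : ℝ) (hβ : 0 < β) (hω : ω < 1)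
    (f : ℝ → ℝ) (hf : ContDiffOn ℝ 1 f (Set.Icc β ω)) :
    ∃ M > 0, ∃ a₀ > 0, ∀ a : ℝ, 0 < a → a < a₀ →
      ∀ y ∈ Metric.thickening r (frontier X),
        intensity X (scaleKernel a ρ) y ∈ Set.Icc β ω →
        intensity (suppHalfspace n (ξ y)) (scaleKernel a ρ) y ∈ Set.Icc β ω →
        |f (intensity X (scaleKernel a ρ) y)
            - f (intensity (suppHalfspace n (ξ y)) (scaleKernel a ρ) y)| ≤ M * a := by
  obtain ⟨L, hL⟩ := hf.exists_lipschitzOnWith one_ne_zero (convex_Icc β ω) isCompact_Icc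
  obtain ⟨D, hD, hρD⟩ := hρsupp.isBounded.subset_closedBall_lt 0 0
  obtain ⟨S, hS⟩ := hρsupp.exists_bound_of_continuous hρC1.continuous
  have hS₀ : 0 ≤ S := (norm_nonneg _).trans (hS 0)
  refine ⟨max (L * (S * Cgeom * (2 * D) ^ (d + 1))) 1, by positivity, r / (2 * D), by positivity,
    fun a ha ha₀ y hy hIX hIH => ?_⟩
  rw [lt_div_iff₀ (by positivity)] at ha₀
  obtain ⟨hξX, hξdist⟩ := hξ y hy
  have hsupp := support_scaleKernel_subset ha ((subset_tsupport ρ).trans hρD)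
  have hyξ : dist y (ξ y) ≤ a * D := hξdist ▸ infDist_frontier_le_of_intensity_mem_Ioo
    hX.isClosed.measurableSet hsupp ((integral_scaleKernel ha).trans hρ1)
    ⟨hβ.trans_le hIX.1, hIX.2.trans_lt hω⟩
  have hdiff := abs_intensity_sub_intensity_le hX.isClosed.measurableSet
    (isClosed_suppHalfspace n (ξ y)).measurableSet (continuous_scaleKernel hρC1.continuous) hsupp
    (norm_scaleKernel_le ha.le hS) hyξ (hgeom (ξ y) hξX _ ⟨by positivity, by linarith⟩)
    (by positivity)
  calc _ ≤ L * |intensity X (scaleKernel a ρ) y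
          - intensity (suppHalfspace n (ξ y)) (scaleKernel a ρ) y| := by
        simpa [Real.dist_eq] using hL.dist_le_mul _ hIX _ hIH
    _ ≤ L * ((a ^ d)⁻¹ * S * (Cgeom * (2 * (a * D)) ^ (d + 1))) := by gcongr
    _ = L * (S * Cgeom * (2 * D) ^ (d + 1)) * a := by
        field_simp
        ring
    _ ≤ _ := by
        gcongr
        exact le_max_left _ _

theorem stmt5 (d : ℕ) (X : Set (EuclideanSpace ℝ (Fin d))) (hX : IsCompact X)
    -- outward unit normal field on the C¹ boundary
    (n : EuclideanSpace ℝ (Fin d) → EuclideanSpace ℝ (Fin d))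
    (hn : ∀ p ∈ frontier X, ‖n p‖ = 1)
    -- quadratic approximation property of the C¹ boundary by supporting halfspaces
    (r Cgeom : ℝ) (hr : 0 < r) (hC : 0 < Cgeom)
    (hgeom : ∀ p ∈ frontier X, ∀ R ∈ Set.Ioo (0 : ℝ) r,
      volume ((symmDiff X (suppHalfspace n p)) ∩ Metric.closedBall p R)
        ≤ ENNReal.ofReal (Cgeom * R ^ (d + 1)))
    -- nearest-point projection onto the boundary, defined on the tubular neighborhood
    (ξ : EuclideanSpace ℝ (Fin d) → EuclideanSpace ℝ (Fin d))
    (hξ : ∀ y ∈ Metric.thickening r (frontier X),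
      ξ y ∈ frontier X ∧ dist y (ξ y) = Metric.infDist y (frontier X))
    -- the kernel: a C¹ radial compactly supported probability density
    (ρ : EuclideanSpace ℝ (Fin d) → ℝ) (hρ0 : ∀ x, 0 ≤ ρ x) (hρC1 : ContDiff ℝ 1 ρ)
    (hρsupp : HasCompactSupport ρ)
    (hρrad : ∀ x y : EuclideanSpace ℝ (Fin d), ‖x‖ = ‖y‖ → ρ x = ρ y)
    (hρ1 : ∫ x, ρ x = 1)
    -- the weight function, C¹ on [β,ω] ⊆ (0,1)
    (β ω : ℝ) (hβ : 0 < β) (hβω : β ≤ ω) (hω : ω < 1)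
    (f : ℝ → ℝ) (hf : ContDiffOn ℝ 1 f (Set.Icc β ω)) :
    ∃ M > 0, ∃ a₀ > 0, ∀ a : ℝ, 0 < a → a < a₀ →
      ∀ y ∈ Metric.thickening r (frontier X),
        intensity X (scaleKernel a ρ) y ∈ Set.Icc β ω →
        intensity (suppHalfspace n (ξ y)) (scaleKernel a ρ) y ∈ Set.Icc β ω →
        |f (intensity X (scaleKernel a ρ) y)
            - f (intensity (suppHalfspace n (ξ y)) (scaleKernel a ρ) y)| ≤ M * a :=
  stmt5_general d X hX n r Cgeom hr hC hgeom ξ hξ ρ hρC1 hρsupp hρ1 β ω hβ hω f hf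
end

section
/- (Phase non-stationarity on a cap) Let X_j ⊆ ℝᵈ be a set and ξ_j ∈ S^{d-1} such that for all distinct x, y ∈ X_j, the angle between x−y and ξ_j is at least 7π/16. Let n : X_j → S^{d-1} be Lipschitz with constant C. Then there exist δ, δ', a₀ > 0 such that for all 0 < a < a₀, all |t| ≤ a, all distinct x, y ∈ X_j, and all u ∈ S^{d-1} with |⟨ξ_j, u⟩| ≥ cos(3π/8): (i) |x − y + t(n(x) − n(y))| ≥ (1−δ)|x−y|, and (ii) |⟨w, u⟩| ≤ 1 − δ' where w = (x − y + t(n(x)−n(y)))/|x − y + t(n(x)−n(y))|. -/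
/-! Write `v = x - y` and `e = t • (n x - n y)`; the Lipschitz bound gives `‖e‖ ≤ δ ‖v‖` once
`|t| < δ / C`, whence (i). The direction of `v` makes an angle in `[7π/16, 9π/16]` with `ξⱼ`, while
`u` lies within `3π/8` of `±ξⱼ`, so by the triangle inequality for angles `v` makes an angle in
`[π/16, 15π/16]` with `u`, i.e. `|⟪v, u⟫| ≤ cos (π/16) ‖v‖`. Adding `e` and normalising costs at most
a factor `(cos (π/16) + δ) / (1 - δ)`, which is `< 1` for small `δ`. -/

open InnerProductGeometry Real
open scoped RealInnerProductSpace

lemma Real.abs_cos_le_cos_of_mem_Icc {θ φ : ℝ} (hθ : 0 ≤ θ) (hθφ : θ ≤ φ) (hφ : φ ≤ π - θ) :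
    |cos φ| ≤ cos θ := by
  refine abs_le.2 ⟨?_, cos_le_cos_of_nonneg_of_le_pi hθ (by linarith) hθφ⟩
  rw [neg_le, ← cos_pi_sub]
  exact cos_le_cos_of_nonneg_of_le_pi hθ (by linarith) (by linarith)

lemma Real.le_or_le_of_cos_le_abs_cos {θ φ : ℝ} (hθ : 0 ≤ θ) (hφπ : φ ≤ π)
    (h : cos θ ≤ |cos φ|) : φ ≤ θ ∨ π - θ ≤ φ := by
  by_contra! hφ
  have hlt : cos φ < cos θ := cos_lt_cos_of_nonneg_of_le_pi hθ hφπ hφ.1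
  have hlt' : -cos φ < cos θ := by
    rw [← cos_pi_sub]; exact cos_lt_cos_of_nonneg_of_le_pi hθ (by linarith) (by linarith)
  exact (abs_lt.2 ⟨by linarith, hlt⟩).not_ge h

namespace InnerProductGeometry

variable {V : Type*} [NormedAddCommGroup V] [InnerProductSpace ℝ V]

lemma abs_cos_angle_le_cos_sub {p ξ u : V} {α β : ℝ} (hβ : 0 ≤ β) (hβα : β ≤ α)
    (hpξ₁ : α ≤ angle p ξ) (hpξ₂ : angle p ξ ≤ π - α) (hξu : cos β ≤ |cos (angle ξ u)|) :
    |cos (angle p u)| ≤ cos (α - β) := by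
  have near : ∀ u : V, angle ξ u ≤ β → |cos (angle p u)| ≤ cos (α - β) := fun u hu =>
    abs_cos_le_cos_of_mem_Icc (sub_nonneg.2 hβα)
      (by linarith [angle_le_angle_add_angle p u ξ, angle_comm u ξ])
      (by linarith [angle_le_angle_add_angle p ξ u])
  rcases le_or_le_of_cos_le_abs_cos hβ (angle_le_pi ξ u) hξu with h | h
  · exact near u h
  · simpa [angle_neg_right, cos_pi_sub] using near (-u) (by rw [angle_neg_right]; linarith)

lemma abs_inner_le_of_abs_cos_angle_le {x y : V} {c : ℝ} (h : |cos (angle x y)| ≤ c) :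
    |⟪x, y⟫| ≤ c * (‖x‖ * ‖y‖) := by
  have hxy : 0 ≤ ‖x‖ * ‖y‖ := by positivity
  rw [← cos_angle_mul_norm_mul_norm, abs_mul, abs_of_nonneg hxy]
  exact mul_le_mul_of_nonneg_right h hxy

end InnerProductGeometry

lemma one_sub_mul_norm_le_norm_add {E : Type*} [SeminormedAddCommGroup E] {v e : E} {δ : ℝ}
    (he : ‖e‖ ≤ δ * ‖v‖) : (1 - δ) * ‖v‖ ≤ ‖v + e‖ := by
  linarith [norm_sub_le_norm_add v e]

lemma abs_inner_normalize_add_le {V : Type*} [NormedAddCommGroup V] [InnerProductSpace ℝ V]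
    {v e u : V} {K δ : ℝ} (hv : v ≠ 0) (hu : ‖u‖ = 1)
    (hvu : |⟪v, u⟫| ≤ K * ‖v‖) (he : ‖e‖ ≤ δ * ‖v‖) (hδ : δ < 1) :
    |⟪‖v + e‖⁻¹ • (v + e), u⟫| ≤ (K + δ) / (1 - δ) := by
  have hδ₁ : 0 < 1 - δ := by linarith
  have hvell : (1 - δ) * ‖v‖ ≤ ‖v + e‖ := one_sub_mul_norm_le_norm_add he
  have hv₀ : 0 < ‖v‖ := norm_pos_iff.2 hv
  have heu : |⟪e, u⟫| ≤ δ * ‖v‖ :=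
    (abs_real_inner_le_norm e u).trans (by rwa [hu, mul_one])
  have hsum : |⟪v + e, u⟫| ≤ (K + δ) * ‖v‖ := by
    rw [inner_add_left, add_mul]
    exact (abs_add_le _ _).trans (add_le_add hvu heu)
  have hratio : 0 ≤ (K + δ) / (1 - δ) :=
    div_nonneg (nonneg_of_mul_nonneg_left ((abs_nonneg _).trans hsum) hv₀) hδ₁.le
  rw [real_inner_smul_left, abs_mul, abs_inv, abs_norm,
    inv_mul_le_iff₀ ((mul_pos hδ₁ hv₀).trans_le hvell)]
  calc |⟪v + e, u⟫| ≤ (K + δ) * ‖v‖ := hsum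
    _ = (1 - δ) * ‖v‖ * ((K + δ) / (1 - δ)) := by field_simp
    _ ≤ ‖v + e‖ * ((K + δ) / (1 - δ)) := mul_le_mul_of_nonneg_right hvell hratio

theorem stmt13_general (d : ℕ) (Xj : Set (EuclideanSpace ℝ (Fin d)))
    (ξj : EuclideanSpace ℝ (Fin d)) (hξj : ‖ξj‖ = 1)
    (hangle : ∀ x ∈ Xj, ∀ y ∈ Xj, x ≠ y →
      7 * π / 16 ≤ InnerProductGeometry.angle (x - y) ξj)
    (n : EuclideanSpace ℝ (Fin d) → EuclideanSpace ℝ (Fin d))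
    (C : ℝ) (hC : 0 < C)
    (hnlip : ∀ x ∈ Xj, ∀ y ∈ Xj, ‖n x - n y‖ ≤ C * ‖x - y‖) :
    ∃ δ > (0:ℝ), ∃ δ' > (0:ℝ), ∃ a₀ > (0:ℝ), ∀ a : ℝ, 0 < a → a < a₀ →
      ∀ t : ℝ, |t| ≤ a → ∀ x ∈ Xj, ∀ y ∈ Xj, x ≠ y →
      ∀ u : EuclideanSpace ℝ (Fin d), ‖u‖ = 1 →
        Real.cos (3 * π / 8) ≤ |(inner ℝ ξj u : ℝ)| →
        (1 - δ) * ‖x - y‖ ≤ ‖x - y + t • (n x - n y)‖ ∧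
        |(inner ℝ (‖x - y + t • (n x - n y)‖⁻¹ • (x - y + t • (n x - n y))) u : ℝ)|
          ≤ 1 - δ' := by
  set K := cos (π / 16)
  have hK : K < 1 := by
    simpa using cos_lt_cos_of_nonneg_of_le_pi le_rfl (by linarith [pi_pos]) (by positivity)
  have hK₀ : -1 ≤ K := neg_one_le_cos _
  refine ⟨(1 - K) / 4, by linarith, 1 - (K + (1 - K) / 4) / (1 - (1 - K) / 4), ?_,
    (1 - K) / 4 / C, by positivity, ?_⟩
  · rw [gt_iff_lt, sub_pos, div_lt_one (by linarith)]
    linarith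
  intro a _ haa t ht x hx y hy hxy u hu hξu
  have hsmall : ‖t • (n x - n y)‖ ≤ (1 - K) / 4 * ‖x - y‖ := by
    rw [norm_smul, Real.norm_eq_abs]
    calc |t| * ‖n x - n y‖ ≤ ((1 - K) / 4 / C) * (C * ‖x - y‖) :=
          mul_le_mul (by linarith) (hnlip x hx y hy) (norm_nonneg _) (by positivity)
      _ = (1 - K) / 4 * ‖x - y‖ := by field_simp
  have hcap : |⟪x - y, u⟫| ≤ K * ‖x - y‖ := by
    have hyx := hangle y hy x hx hxy.symm
    rw [← neg_sub, angle_neg_left] at hyx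
    have hcos := abs_cos_angle_le_cos_sub (α := 7 * π / 16) (β := 3 * π / 8) (by positivity)
      (by linarith [pi_pos]) (hangle x hx y hy hxy) (by linarith)
      (by rwa [← inner_eq_cos_angle_of_norm_eq_one hξj hu])
    rw [show 7 * π / 16 - 3 * π / 8 = π / 16 by ring] at hcos
    simpa only [hu, mul_one] using abs_inner_le_of_abs_cos_angle_le hcos
  exact ⟨one_sub_mul_norm_le_norm_add hsmall, (abs_inner_normalize_add_le (sub_ne_zero.2 hxy) hu
    hcap hsmall (by linarith)).trans_eq (by ring)⟩

theorem stmt13 (d : ℕ) (Xj : Set (EuclideanSpace ℝ (Fin d)))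
    (ξj : EuclideanSpace ℝ (Fin d)) (hξj : ‖ξj‖ = 1)
    (hangle : ∀ x ∈ Xj, ∀ y ∈ Xj, x ≠ y →
      7 * π / 16 ≤ InnerProductGeometry.angle (x - y) ξj)
    (n : EuclideanSpace ℝ (Fin d) → EuclideanSpace ℝ (Fin d))
    (hnunit : ∀ x ∈ Xj, ‖n x‖ = 1)
    (C : ℝ) (hC : 0 < C)
    (hnlip : ∀ x ∈ Xj, ∀ y ∈ Xj, ‖n x - n y‖ ≤ C * ‖x - y‖) :
    ∃ δ > (0:ℝ), ∃ δ' > (0:ℝ), ∃ a₀ > (0:ℝ), ∀ a : ℝ, 0 < a → a < a₀ →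
      ∀ t : ℝ, |t| ≤ a → ∀ x ∈ Xj, ∀ y ∈ Xj, x ≠ y →
      ∀ u : EuclideanSpace ℝ (Fin d), ‖u‖ = 1 →
        Real.cos (3 * π / 8) ≤ |(inner ℝ ξj u : ℝ)| →
        (1 - δ) * ‖x - y‖ ≤ ‖x - y + t • (n x - n y)‖ ∧
        |(inner ℝ (‖x - y + t • (n x - n y)‖⁻¹ • (x - y + t • (n x - n y))) u : ℝ)|
          ≤ 1 - δ' :=
  stmt13_general d Xj ξj hξj hangle n C hC hnlip
end
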